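/- arXiv:1406.7256 — 2 statements merged into one kernel-verified Lean document; each statement's English description precedes it below -/
import Mathlib

section
/- The upper bound in the rooted disentangling theorem: for any two distinct unordered multisets S, T of r rooted binary leaf-labelled trees on a common leaf set X, there is a subset K ⊆ X of size at most 3(⌊log₂ r⌋ + 1) with S|K ≠ T|K as multisets. -/
/-- A rooted binary leaf-labelled tree on the label set `X`, encoded by its set of
clusters (sets of leaf labels below the vertices): a laminar family on `X`
containing `X` and all singletons, in which every cluster with at least two
elements is the disjoint union of exactly two proper subclusters. -/
def IsRBT (X : Finset ℕ) (C : Finset (Finset ℕ)) : Prop :=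
  X ∈ C ∧ (∀ x ∈ X, {x} ∈ C) ∧ (∀ A ∈ C, A ⊆ X ∧ A.Nonempty) ∧
  (∀ A ∈ C, ∀ B ∈ C, A ∩ B = ∅ ∨ A ⊆ B ∨ B ⊆ A) ∧
  (∀ A ∈ C, 2 ≤ A.card → ∃ B ∈ C, ∃ D ∈ C, Disjoint B D ∧ B ∪ D = A ∧ B ≠ A ∧ D ≠ A)

/-- The restriction `T|K` of a rooted leaf-labelled tree to a subset `K` of the
leaves, in cluster encoding: the nonempty intersections of clusters with `K`. -/
def restrictR (C : Finset (Finset ℕ)) (K : Finset ℕ) : Finset (Finset ℕ) :=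
  (C.image (· ∩ K)).filter (·.Nonempty)

lemma mem_restrictR {C : Finset (Finset ℕ)} {K A : Finset ℕ} :
    A ∈ restrictR C K ↔ A.Nonempty ∧ ∃ E ∈ C, E ∩ K = A := by
  simp [restrictR, and_comm]

lemma restrictR_restrictR {C : Finset (Finset ℕ)} {K K₁ : Finset ℕ} (h : K₁ ⊆ K) :
    restrictR (restrictR C K) K₁ = restrictR C K₁ := by
  have hKK : K ∩ K₁ = K₁ := Finset.inter_eq_right.2 h
  ext A
  simp only [mem_restrictR]
  constructor
  · rintro ⟨hA, E, hE, rfl⟩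
    obtain ⟨-, F, hF, rfl⟩ := hE
    rw [Finset.inter_assoc, hKK] at hA ⊢
    exact ⟨hA, F, hF, rfl⟩
  · rintro ⟨hA, F, hF, rfl⟩
    refine ⟨hA, F ∩ K, ⟨?_, F, hF, rfl⟩, by rw [Finset.inter_assoc, hKK]⟩
    exact hA.mono (Finset.inter_subset_inter (le_refl F) h)

lemma mem_iff_triples {X : Finset ℕ} {C : Finset (Finset ℕ)} (hC : IsRBT X C)
    {A : Finset ℕ} :
    A ∈ C ↔ A ⊆ X ∧ A.Nonempty ∧
      ∀ a ∈ A, ∀ b ∈ A, ∀ c ∈ X, c ∉ A → ∃ E ∈ C, a ∈ E ∧ b ∈ E ∧ c ∉ E := by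
  obtain ⟨hX, hsing, hsub, hlam, hsplit⟩ := hC
  constructor
  · intro hA
    refine ⟨(hsub A hA).1, (hsub A hA).2, fun a ha b hb c _ hc => ⟨A, hA, ha, hb, hc⟩⟩
  · rintro ⟨hAX, hAne, hP⟩
    by_contra hA
    -- take B ∈ C of minimal card with A ⊆ B
    have hSne : ((C.filter (A ⊆ ·))).Nonempty := ⟨X, Finset.mem_filter.2 ⟨hX, hAX⟩⟩
    obtain ⟨B, hBmem, hBmin⟩ := Finset.exists_min_image _ (fun B => B.card) hSne
    rw [Finset.mem_filter] at hBmem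
    obtain ⟨hBC, hAB⟩ := hBmem
    have hABne : A ≠ B := fun h => hA (h ▸ hBC)
    obtain ⟨c, hcB, hcA⟩ := Finset.exists_of_ssubset (hAB.ssubset_of_ne hABne)
    have hB2 : 2 ≤ B.card := by
      have h1 : 1 ≤ A.card := Finset.card_pos.2 hAne
      have := Finset.card_lt_card (hAB.ssubset_of_ne hABne)
      omega
    obtain ⟨B₁, hB₁, B₂, hB₂, hdisj, hunion, hB₁ne, hB₂ne⟩ := hsplit B hBC hB2
    have hB₁lt : B₁.card < B.card :=
      Finset.card_lt_card ((hunion ▸ Finset.subset_union_left).ssubset_of_ne hB₁ne)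
    have hB₂lt : B₂.card < B.card :=
      Finset.card_lt_card ((hunion ▸ Finset.subset_union_right).ssubset_of_ne hB₂ne)
    have hnot₁ : ¬ A ⊆ B₁ := fun h =>
      absurd (hBmin B₁ (Finset.mem_filter.2 ⟨hB₁, h⟩)) (by omega)
    have hnot₂ : ¬ A ⊆ B₂ := fun h =>
      absurd (hBmin B₂ (Finset.mem_filter.2 ⟨hB₂, h⟩)) (by omega)
    obtain ⟨a, haA, haB₁⟩ := Finset.not_subset.1 hnot₁
    obtain ⟨b, hbA, hbB₂⟩ := Finset.not_subset.1 hnot₂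
    have haB₂ : a ∈ B₂ := by
      have : a ∈ B := hAB haA
      rw [← hunion, Finset.mem_union] at this; tauto
    have hbB₁ : b ∈ B₁ := by
      have : b ∈ B := hAB hbA
      rw [← hunion, Finset.mem_union] at this; tauto
    obtain ⟨E, hE, haE, hbE, hcE⟩ := hP a haA b hbA c ((hsub B hBC).1 hcB) hcA
    have hsub₁ : B₁ ⊆ E := by
      rcases hlam B₁ hB₁ E hE with h | h | h
      · have := Finset.eq_empty_iff_forall_notMem.1 h b
        simp [hbB₁, hbE] at this
      · exact h
      · exact absurd (h haE) haB₁
    have hsub₂ : B₂ ⊆ E := by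
      rcases hlam B₂ hB₂ E hE with h | h | h
      · have := Finset.eq_empty_iff_forall_notMem.1 h a
        simp [haB₂, haE] at this
      · exact h
      · exact absurd (h hbE) (fun hb2 => (Finset.disjoint_left.1 hdisj hbB₁) hb2)
    have hcBE : c ∈ E := by
      have : c ∈ B₁ ∪ B₂ := hunion ▸ hcB
      rcases Finset.mem_union.1 this with h | h
      · exact hsub₁ h
      · exact hsub₂ h
    exact hcE hcBE

lemma triple_prop_iff {C : Finset (Finset ℕ)} {a b c : ℕ} :
    (∃ E ∈ C, a ∈ E ∧ b ∈ E ∧ c ∉ E) ↔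
      (∃ F ∈ restrictR C ({a, b, c} : Finset ℕ), a ∈ F ∧ b ∈ F ∧ c ∉ F) := by
  constructor
  · rintro ⟨E, hE, haE, hbE, hcE⟩
    refine ⟨E ∩ {a, b, c}, mem_restrictR.2 ⟨⟨a, by simp [haE]⟩, E, hE, rfl⟩, ?_, ?_, ?_⟩
    · simp [haE]
    · simp [hbE]
    · simp [hcE]
  · rintro ⟨F, hF, haF, hbF, hcF⟩
    obtain ⟨-, E, hE, rfl⟩ := mem_restrictR.1 hF
    exact ⟨E, hE, (Finset.mem_inter.1 haF).1, (Finset.mem_inter.1 hbF).1,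
      fun h => hcF (Finset.mem_inter.2 ⟨h, by simp⟩)⟩

lemma exists_triple {X : Finset ℕ} {C D : Finset (Finset ℕ)} (hC : IsRBT X C)
    (hD : IsRBT X D) (hne : C ≠ D) :
    ∃ a ∈ X, ∃ b ∈ X, ∃ c ∈ X,
      restrictR C ({a, b, c} : Finset ℕ) ≠ restrictR D ({a, b, c} : Finset ℕ) := by
  by_contra h
  push_neg at h
  apply hne
  ext A
  rw [mem_iff_triples hC, mem_iff_triples hD]
  constructor <;> rintro ⟨h1, h2, h3⟩ <;> refine ⟨h1, h2, fun a ha b hb c hc hcA => ?_⟩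
  · rw [triple_prop_iff, ← h a (h1 ha) b (h1 hb) c hc, ← triple_prop_iff]
    exact h3 a ha b hb c hc hcA
  · rw [triple_prop_iff, h a (h1 ha) b (h1 hb) c hc, ← triple_prop_iff]
    exact h3 a ha b hb c hc hcA

lemma exists_two_diff {α : Type*} [DecidableEq α] {S T : Multiset α}
    (hcard : Multiset.card S = Multiset.card T) (hne : S ≠ T) :
    ∃ A B, A ≠ B ∧ S.count A ≠ T.count A ∧ S.count B ≠ T.count B := by
  have : ∃ A, S.count A ≠ T.count A := by
    by_contra h; push_neg at h; exact hne (Multiset.ext.2 h)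
  obtain ⟨A, hA⟩ := this
  by_contra h
  push_neg at h
  have hfil : S.filter (fun x => ¬ A = x) = T.filter (fun x => ¬ A = x) := by
    ext B
    by_cases hB : A = B
    · simp [Multiset.count_filter, hB]
    · have hBeq : S.count B = T.count B := h A B (fun e => hB (e ▸ rfl)) hA
      simp [Multiset.count_filter, hB, hBeq]
  have h1 := Multiset.filter_add_not (fun x => A = x) S
  have h2 := Multiset.filter_add_not (fun x => A = x) T
  have c1 : (S.filter (fun x => A = x)).card + (S.filter (fun x => ¬ A = x)).card
      = Multiset.card S := by rw [← Multiset.card_add, h1]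
  have c2 : (T.filter (fun x => A = x)).card + (T.filter (fun x => ¬ A = x)).card
      = Multiset.card T := by rw [← Multiset.card_add, h2]
  have e1 : (S.filter (fun x => A = x)).card = S.count A := by
    rw [Multiset.count, Multiset.countP_eq_card_filter]
  have e2 : (T.filter (fun x => A = x)).card = T.count A := by
    rw [Multiset.count, Multiset.countP_eq_card_filter]
  rw [hfil] at c1
  omega

lemma main_lemma : ∀ r : ℕ, ∀ (X : Finset ℕ) (S T : Multiset (Finset (Finset ℕ))),
    Multiset.card S = r → Multiset.card T = r →
    (∀ C ∈ S, IsRBT X C) → (∀ C ∈ T, IsRBT X C) → S ≠ T →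
    ∃ K ⊆ X, K.card ≤ 3 * (Nat.log 2 r + 1) ∧
      S.map (fun C => restrictR C K) ≠ T.map (fun C => restrictR C K) := by
  intro r
  induction r using Nat.strong_induction_on with
  | _ r ih =>
  intro X S T hSr hTr hS hT hne
  obtain ⟨A, B, hAB, hcA, hcB⟩ := exists_two_diff (hSr.trans hTr.symm) hne
  have hmem : ∀ {C : Finset (Finset ℕ)}, S.count C ≠ T.count C → IsRBT X C := by
    intro C hc
    rcases Nat.lt_or_ge 0 (S.count C) with h | h
    · exact hS C (Multiset.count_pos.1 h)
    · exact hT C (Multiset.count_pos.1 (by omega))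
  obtain ⟨a, ha, b, hb, c, hc, hK₁ne⟩ := exists_triple (hmem hcA) (hmem hcB) hAB
  set K₁ : Finset ℕ := {a, b, c} with hK₁def
  have hK₁X : K₁ ⊆ X := by
    intro x hx
    simp only [hK₁def, Finset.mem_insert, Finset.mem_singleton] at hx
    rcases hx with rfl | rfl | rfl <;> assumption
  have hK₁card : K₁.card ≤ 3 := by
    apply le_trans (Finset.card_insert_le _ _)
    have := Finset.card_insert_le b ({c} : Finset ℕ)
    simp at this ⊢; omega
  by_cases hmap : S.map (fun C => restrictR C K₁) = T.map (fun C => restrictR C K₁)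
  case neg =>
    exact ⟨K₁, hK₁X, le_trans hK₁card (by omega), hmap⟩
  case pos =>
  -- class cardinalities agree
  have hclass : ∀ w : Finset (Finset ℕ),
      (S.filter (fun C => w = restrictR C K₁)).card
        = (T.filter (fun C => w = restrictR C K₁)).card := by
    intro w
    have := congrArg (Multiset.count w) hmap
    rwa [Multiset.count_map, Multiset.count_map] at this
  -- the two classes are disjoint, so one has size ≤ r/2
  have hsplitcard : (S.filter (fun C => restrictR A K₁ = restrictR C K₁)).card
      + (S.filter (fun C => restrictR B K₁ = restrictR C K₁)).card ≤ r := by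
    have hle : S.filter (fun C => restrictR B K₁ = restrictR C K₁)
        ≤ S.filter (fun C => ¬ restrictR A K₁ = restrictR C K₁) := by
      apply Multiset.monotone_filter_right
      intro C hC
      intro h; exact hK₁ne (h.trans hC.symm)
    have := Multiset.card_le_card hle
    have htot : (S.filter (fun C => restrictR A K₁ = restrictR C K₁)).card
        + (S.filter (fun C => ¬ restrictR A K₁ = restrictR C K₁)).card = r := by
      rw [← Multiset.card_add, Multiset.filter_add_not, hSr]
    omega
  -- choose a class of size ≤ r/2 containing a tree of differing multiplicity
  have hchoose : ∃ A₀ : Finset (Finset ℕ), S.count A₀ ≠ T.count A₀ ∧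
      (S.filter (fun C => restrictR A₀ K₁ = restrictR C K₁)).card ≤ r / 2 := by
    rcases le_or_gt (S.filter (fun C => restrictR A K₁ = restrictR C K₁)).card (r / 2)
      with h | h
    · exact ⟨A, hcA, h⟩
    · exact ⟨B, hcB, by omega⟩
  obtain ⟨A₀, hcA₀, hhalf⟩ := hchoose
  set p : Finset (Finset ℕ) → Prop := fun C => restrictR A₀ K₁ = restrictR C K₁ with hpdef
  set Sw := S.filter p with hSwdef
  set Tw := T.filter p with hTwdef
  have hcards : Sw.card = Tw.card := hclass _
  -- Sw ≠ Tw since A₀ has differing multiplicity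
  have hwne : Sw ≠ Tw := by
    intro h
    apply hcA₀
    have h1 : Sw.count A₀ = S.count A₀ := Multiset.count_filter_of_pos rfl
    have h2 : Tw.count A₀ = T.count A₀ := Multiset.count_filter_of_pos rfl
    rw [← h1, ← h2, h]
  have hs1 : 1 ≤ Sw.card := by
    rcases Nat.eq_zero_or_pos Sw.card with h | h
    · exfalso
      apply hwne
      rw [Multiset.card_eq_zero.1 h,
        Multiset.card_eq_zero.1 (by omega : Multiset.card Tw = 0)]
    · exact h
  have hr2 : 2 ≤ r := by omega
  have hslt : Sw.card < r := by omega
  obtain ⟨K₂, hK₂X, hK₂card, hK₂ne⟩ := ih Sw.card hslt X Sw Tw rfl hcards.symm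
    (fun C hC => hS C (Multiset.mem_of_mem_filter hC))
    (fun C hC => hT C (Multiset.mem_of_mem_filter hC)) hwne
  refine ⟨K₁ ∪ K₂, Finset.union_subset hK₁X hK₂X, ?_, ?_⟩
  · -- cardinality bound
    have hlog1 : Nat.log 2 Sw.card ≤ Nat.log 2 (r / 2) := Nat.log_mono_right hhalf
    have hlog2 : Nat.log 2 (r / 2) = Nat.log 2 r - 1 := Nat.log_div_base 2 r
    have hlog3 : 0 < Nat.log 2 r := Nat.log_pos one_lt_two hr2
    have := Finset.card_union_le K₁ K₂
    omega
  · -- the union disentangles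
    intro heq
    apply hK₂ne
    set K := K₁ ∪ K₂ with hKdef
    have hK₁K : K₁ ⊆ K := Finset.subset_union_left
    have hK₂K : K₂ ⊆ K := Finset.subset_union_right
    have hfun₂ : (fun C => restrictR C K₂)
        = (fun D => restrictR D K₂) ∘ (fun C => restrictR C K) := by
      funext C; exact (restrictR_restrictR hK₂K).symm
    have hfun₁ : ∀ C, p C ↔ restrictR A₀ K₁ = restrictR (restrictR C K) K₁ := by
      intro C; rw [hpdef]; rw [restrictR_restrictR hK₁K]
    have hmapSw : Sw.map (fun C => restrictR C K)
        = (S.map (fun C => restrictR C K)).filter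
            (fun D => restrictR A₀ K₁ = restrictR D K₁) := by
      rw [Multiset.filter_map]
      rw [hSwdef]
      congr 1
      apply Multiset.filter_congr
      intro C _
      simpa using (hfun₁ C)
    have hmapTw : Tw.map (fun C => restrictR C K)
        = (T.map (fun C => restrictR C K)).filter
            (fun D => restrictR A₀ K₁ = restrictR D K₁) := by
      rw [Multiset.filter_map]
      rw [hTwdef]
      congr 1
      apply Multiset.filter_congr
      intro C _
      simpa using (hfun₁ C)
    calc Sw.map (fun C => restrictR C K₂)
        = (Sw.map (fun C => restrictR C K)).map (fun D => restrictR D K₂) := by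
          rw [Multiset.map_map, ← hfun₂]
      _ = (Tw.map (fun C => restrictR C K)).map (fun D => restrictR D K₂) := by
          rw [hmapSw, hmapTw, heq]
      _ = Tw.map (fun C => restrictR C K₂) := by rw [Multiset.map_map, ← hfun₂]

/-- Upper bound in the rooted disentangling theorem: any two distinct multisets
of `r` rooted binary leaf-labelled trees on a common leaf set `X` are
disentangled by some subset `K ⊆ X` of size at most `3(⌊log₂ r⌋ + 1)`. -/
theorem rooted_disentangling_upper_bound (r : ℕ) (X : Finset ℕ)
    (S T : Multiset (Finset (Finset ℕ)))
    (hSr : Multiset.card S = r) (hTr : Multiset.card T = r)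
    (hS : ∀ C ∈ S, IsRBT X C) (hT : ∀ C ∈ T, IsRBT X C) (hne : S ≠ T) :
    ∃ K ⊆ X, K.card ≤ 3 * (Nat.log 2 r + 1) ∧
      S.map (fun C => restrictR C K) ≠ T.map (fun C => restrictR C K) := by
  exact main_lemma r X S T hSr hTr hS hT hne
end

section
/- If two distinct unrooted binary leaf-labelled trees S and T on [n] satisfy S|K = T|K for both K = [n]\{i} and K = [n]\{j} with i ≠ j, then S and T differ only in the placement of leaves i and j along a common path: both trees consist of two rooted subtrees joined by a path, with leaves i and j attached (in some order) to edges of this path. -/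
/-- An unrooted binary leaf-labelled tree on the label set `X`, encoded by its
split system: the collection of sides of edge-induced bipartitions of `X`.
The collection is closed under complementation, pairwise compatible, contains
all trivial (singleton) splits, and has the cardinality `2·(2|X| - 3)` forced
by a binary (trivalent) tree. -/
def IsUBT (X : Finset ℕ) (S : Finset (Finset ℕ)) : Prop :=
  (∀ A ∈ S, A ⊆ X ∧ A.Nonempty ∧ (X \ A).Nonempty) ∧
  (∀ A ∈ S, X \ A ∈ S) ∧
  (∀ x ∈ X, {x} ∈ S) ∧
  (∀ A ∈ S, ∀ B ∈ S, A ∩ B = ∅ ∨ A ⊆ B ∨ B ⊆ A ∨ X ⊆ A ∪ B) ∧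
  S.card = 4 * X.card - 6

/-- The restriction `T|K` of an unrooted leaf-labelled tree to a subset `K` of
its leaves, in split encoding: intersections of split sides with `K` that give
a nonempty proper part of `K`. -/
def restrictU (S : Finset (Finset ℕ)) (K : Finset ℕ) : Finset (Finset ℕ) :=
  (S.image (· ∩ K)).filter (fun B => B.Nonempty ∧ B ≠ K)

/-- `B` is a split side compatible with the structure "two rooted subtrees
(on `A` and on `X \ (A ∪ {i,j})`) joined by a path, with leaves `i` and `j`
attached to edges of this path": `B` lies inside one of the two rooted
subtrees, inside the pendant part `{i,j}`, or is a path split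
`A ⊆ B ⊆ A ∪ {i,j}`. -/
def SideOnPath (X : Finset ℕ) (i j : ℕ) (A B : Finset ℕ) : Prop :=
  B ⊆ A ∨ B ⊆ (X \ A) \ {i, j} ∨ B ⊆ {i, j} ∨ (A ⊆ B ∧ B ⊆ A ∪ {i, j})

/-- A tree (split system) `S` on `X` has the path structure of Figure 2: two
rooted subtrees joined by a path with leaves `i`, `j` attached to path edges. -/
def PathStructure (X : Finset ℕ) (i j : ℕ) (A : Finset ℕ) (S : Finset (Finset ℕ)) : Prop :=
  ∀ B ∈ S, SideOnPath X i j A B ∨ SideOnPath X i j A (X \ B)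

lemma compl_compl' {X C : Finset ℕ} (h : C ⊆ X) : X \ (X \ C) = C := by
  ext x
  simp only [Finset.mem_sdiff, not_and, not_not]
  constructor
  · rintro ⟨hx, hh⟩; exact hh hx
  · intro hx; exact ⟨h hx, fun _ => hx⟩

lemma restrict_restrict (S : Finset (Finset ℕ)) (K K' : Finset ℕ) (h : K ⊆ K') :
    restrictU (restrictU S K') K = restrictU S K := by
  have hKK : K' ∩ K = K := Finset.inter_eq_right.mpr h
  ext B
  simp only [restrictU, Finset.mem_filter, Finset.mem_image]
  constructor
  · rintro ⟨⟨D, hD, rfl⟩, h1, h2⟩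
    obtain ⟨⟨C, hCS, rfl⟩, hDne, hDK'⟩ := hD
    exact ⟨⟨C, hCS, by rw [Finset.inter_assoc, hKK]⟩, h1, h2⟩
  · rintro ⟨⟨C, hCS, rfl⟩, h1, h2⟩
    refine ⟨⟨C ∩ K', ⟨⟨C, hCS, rfl⟩, ?_, ?_⟩, by rw [Finset.inter_assoc, hKK]⟩, h1, h2⟩
    · exact h1.mono (Finset.inter_subset_inter (Finset.Subset.refl C) h)
    · intro hEq
      apply h2
      have hK'C : K' ⊆ C := by
        intro x hx
        rw [← hEq] at hx
        exact (Finset.mem_inter.mp hx).1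
      exact Finset.inter_eq_right.mpr (h.trans hK'C)

lemma toggle (X : Finset ℕ) (S T : Finset (Finset ℕ)) (i : ℕ)
    (hS : IsUBT X S) (hT : IsUBT X T) (hi : i ∈ X)
    (hKi : restrictU S (X.erase i) = restrictU T (X.erase i))
    (C : Finset ℕ) (hCS : C ∈ S) (hCT : C ∉ T) :
    (i ∈ C → C.erase i ∈ T) ∧ (i ∉ C → insert i C ∈ T) := by
  obtain ⟨hS1, hS2, hS3, hS4, hS5⟩ := hS
  obtain ⟨hT1, hT2, hT3, hT4, hT5⟩ := hT
  obtain ⟨hCX, hCne, hXCne⟩ := hS1 C hCS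
  have hiT : ({i} : Finset ℕ) ∈ T := hT3 i hi
  have hXiT : X \ {i} ∈ T := hT2 _ hiT
  have hinter : ∀ D : Finset ℕ, D ⊆ X → D ∩ X.erase i = D.erase i := by
    intro D hDX
    ext x
    simp only [Finset.mem_inter, Finset.mem_erase]
    constructor
    · rintro ⟨h1, h2, h3⟩; exact ⟨h2, h1⟩
    · rintro ⟨h1, h2⟩; exact ⟨h2, h1, hDX h2⟩
  have hmem : C.erase i ∈ restrictU S (X.erase i) := by
    simp only [restrictU, Finset.mem_filter, Finset.mem_image]
    refine ⟨⟨C, hCS, hinter C hCX⟩, ?_, ?_⟩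
    · rcases Finset.eq_empty_or_nonempty (C.erase i) with he | hne
      · exfalso
        have hsub : C ⊆ {i} := by
          intro x hx
          by_contra hxi
          rw [Finset.mem_singleton] at hxi
          have : x ∈ C.erase i := Finset.mem_erase.mpr ⟨hxi, hx⟩
          simp [he] at this
        rcases Finset.subset_singleton_iff.mp hsub with h' | h'
        · exact hCne.ne_empty h'
        · exact hCT (h' ▸ hiT)
      · exact hne
    · intro hEq
      have hiC : i ∉ C := by
        intro hx
        have hXsub : X ⊆ C := by
          intro y hy
          by_cases hyi : y = i
          · subst hyi; exact hx
          · have : y ∈ C.erase i := by rw [hEq]; exact Finset.mem_erase.mpr ⟨hyi, hy⟩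
            exact Finset.mem_of_mem_erase this
        obtain ⟨z, hz⟩ := hXCne
        rw [Finset.mem_sdiff] at hz
        exact hz.2 (hXsub hz.1)
      have hCeq : C = X \ {i} := by
        apply Finset.Subset.antisymm
        · intro x hx
          rw [Finset.mem_sdiff, Finset.mem_singleton]
          exact ⟨hCX hx, fun h' => hiC (h' ▸ hx)⟩
        · intro x hx
          rw [Finset.mem_sdiff, Finset.mem_singleton] at hx
          have : x ∈ C.erase i := by rw [hEq]; exact Finset.mem_erase.mpr ⟨hx.2, hx.1⟩
          exact Finset.mem_of_mem_erase this
      exact hCT (hCeq ▸ hXiT)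
  rw [hKi] at hmem
  simp only [restrictU, Finset.mem_filter, Finset.mem_image] at hmem
  obtain ⟨⟨E, hET, hE⟩, hne', hneq'⟩ := hmem
  have hEX := (hT1 E hET).1
  rw [hinter E hEX] at hE
  have hE' : ∀ x, x ≠ i → (x ∈ E ↔ x ∈ C) := by
    intro x hx
    constructor
    · intro h
      have : x ∈ C.erase i := by rw [← hE]; exact Finset.mem_erase.mpr ⟨hx, h⟩
      exact Finset.mem_of_mem_erase this
    · intro h
      have : x ∈ E.erase i := by rw [hE]; exact Finset.mem_erase.mpr ⟨hx, h⟩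
      exact Finset.mem_of_mem_erase this
  constructor
  · intro hiC
    by_cases hiE : i ∈ E
    · exfalso
      apply hCT
      have : E = C := by
        ext x
        by_cases hxi : x = i
        · subst hxi; simp [hiE, hiC]
        · exact hE' x hxi
      exact this ▸ hET
    · have : E = C.erase i := by
        ext x
        by_cases hxi : x = i
        · subst hxi; simp [hiE]
        · rw [Finset.mem_erase]
          simp [hxi, hE' x hxi]
      exact this ▸ hET
  · intro hiC
    by_cases hiE : i ∈ E
    · have : E = insert i C := by
        ext x
        by_cases hxi : x = i
        · subst hxi; simp [hiE]
        · simp [Finset.mem_insert, hxi, hE' x hxi]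
      exact this ▸ hET
    · exfalso
      apply hCT
      have : E = C := by
        ext x
        by_cases hxi : x = i
        · subst hxi; simp [hiE, hiC]
        · exact hE' x hxi
      exact this ▸ hET

lemma mem_pair {i j x : ℕ} : x ∈ ({i, j} : Finset ℕ) ↔ x = i ∨ x = j := by
  simp [Finset.mem_insert, Finset.mem_singleton]

/-- Compatibility with the two anchor splits `A` and `A ∪ {i,j}` forces SideOnPath. -/
lemma compatSOP {X A C : Finset ℕ} {i j : ℕ} (hAX : A ⊆ X) (hCX : C ⊆ X)
    (h1 : C ∩ A = ∅ ∨ C ⊆ A ∨ A ⊆ C ∨ X ⊆ C ∪ A)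
    (h2 : C ∩ (A ∪ {i, j}) = ∅ ∨ C ⊆ A ∪ {i, j} ∨ A ∪ {i, j} ⊆ C ∨ X ⊆ C ∪ (A ∪ {i, j})) :
    SideOnPath X i j A C ∨ SideOnPath X i j A (X \ C) := by
  unfold SideOnPath
  rcases h2 with h2 | h2 | h2 | h2
  · -- C disjoint from A ∪ {i,j}
    left; right; left
    intro x hx
    have hx' : x ∉ A ∪ ({i, j} : Finset ℕ) := by
      intro hxA
      have := Finset.eq_empty_iff_forall_notMem.mp h2 x
      exact this (Finset.mem_inter.mpr ⟨hx, hxA⟩)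
    rw [Finset.mem_union] at hx'
    push_neg at hx'
    simp only [Finset.mem_sdiff]
    exact ⟨⟨hCX hx, hx'.1⟩, hx'.2⟩
  · -- C ⊆ A ∪ {i,j}
    rcases h1 with h1 | h1 | h1 | h1
    · left; right; right; left
      intro x hx
      rcases Finset.mem_union.mp (h2 hx) with hA | h
      · exact absurd (Finset.mem_inter.mpr ⟨hx, hA⟩)
          (Finset.eq_empty_iff_forall_notMem.mp h1 x)
      · exact h
    · left; left; exact h1
    · left; right; right; right; exact ⟨h1, h2⟩
    · right; left
      intro x hx
      rw [Finset.mem_sdiff] at hx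
      rcases Finset.mem_union.mp (h1 hx.1) with h | h
      · exact absurd h hx.2
      · exact h
  · -- A ∪ {i,j} ⊆ C
    right; right; left
    intro x hx
    rw [Finset.mem_sdiff] at hx
    have : x ∉ A ∪ ({i, j} : Finset ℕ) := fun hh => hx.2 (h2 hh)
    rw [Finset.mem_union] at this
    push_neg at this
    simp only [Finset.mem_sdiff]
    exact ⟨⟨hx.1, this.1⟩, this.2⟩
  · -- X ⊆ C ∪ (A ∪ {i,j}), i.e. X \ C ⊆ A ∪ {i,j}
    have h2' : X \ C ⊆ A ∪ ({i, j} : Finset ℕ) := by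
      intro x hx
      rw [Finset.mem_sdiff] at hx
      rcases Finset.mem_union.mp (h2 hx.1) with h | h
      · exact absurd h hx.2
      · exact h
    rcases h1 with h1 | h1 | h1 | h1
    · right; right; right; right
      refine ⟨?_, h2'⟩
      intro x hx
      rw [Finset.mem_sdiff]
      refine ⟨hAX hx, fun hc => ?_⟩
      exact Finset.eq_empty_iff_forall_notMem.mp h1 x (Finset.mem_inter.mpr ⟨hc, hx⟩)
    · left; left; exact h1
    · right; right; right; left
      intro x hx
      rcases Finset.mem_union.mp (h2' hx) with h | h
      · exact absurd h (fun hxA => (Finset.mem_sdiff.mp hx).2 (h1 hxA))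
      · exact h
    · right; left
      intro x hx
      rw [Finset.mem_sdiff] at hx
      rcases Finset.mem_union.mp (h1 hx.1) with h | h
      · exact absurd h hx.2
      · exact h

/-- Consequence of SideOnPath for a split side avoiding both i and j. -/
lemma subL1 {X A D : Finset ℕ} {i j : ℕ}
    (hiX : i ∈ X) (hiA : i ∉ A)
    (hDX : D ⊆ X) (hDne : D.Nonempty) (hiD : i ∉ D) (hjD : j ∉ D)
    (h : SideOnPath X i j A D ∨ SideOnPath X i j A (X \ D)) :
    D ⊆ A ∨ D ⊆ (X \ A) \ {i, j} ∨ X \ D ⊆ {i, j} := by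
  rcases h with (h | h | h | ⟨h1, h2⟩) | (h | h | h | ⟨h1, h2⟩)
  · exact Or.inl h
  · exact Or.inr (Or.inl h)
  · exfalso
    obtain ⟨x, hx⟩ := hDne
    rcases mem_pair.mp (h hx) with rfl | rfl
    exacts [hiD hx, hjD hx]
  · left
    intro x hx
    rcases Finset.mem_union.mp (h2 hx) with hA | hp
    · exact hA
    · rcases mem_pair.mp hp with rfl | rfl
      exacts [absurd hx hiD, absurd hx hjD]
  · exact absurd (h (Finset.mem_sdiff.mpr ⟨hiX, hiD⟩)) hiA
  · exfalso
    have := h (Finset.mem_sdiff.mpr ⟨hiX, hiD⟩)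
    rw [Finset.mem_sdiff] at this
    exact this.2 (mem_pair.mpr (Or.inl rfl))
  · exact Or.inr (Or.inr h)
  · right; left
    intro x hx
    simp only [Finset.mem_sdiff]
    refine ⟨⟨hDX hx, fun hxA => ?_⟩, fun hp => ?_⟩
    · exact (Finset.mem_sdiff.mp (h1 hxA)).2 hx
    · rcases mem_pair.mp hp with rfl | rfl
      exacts [hiD hx, hjD hx]

/-- Consequence of SideOnPath for a split side containing both i and j. -/
lemma subL2 {X A D : Finset ℕ} {i j : ℕ}
    (hiA : i ∉ A) (hjA : j ∉ A) (hAX : A ⊆ X)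
    (hDX : D ⊆ X) (hXDne : (X \ D).Nonempty) (hiD : i ∈ D) (hjD : j ∈ D)
    (h : SideOnPath X i j A D ∨ SideOnPath X i j A (X \ D)) :
    X \ D ⊆ A ∨ A ∪ {i, j} ⊆ D ∨ D ⊆ {i, j} := by
  rcases h with (h | h | h | ⟨h1, h2⟩) | (h | h | h | ⟨h1, h2⟩)
  · exact absurd (h hiD) hiA
  · exact absurd (Finset.mem_sdiff.mp (h hiD)).2 (fun hh => hh (mem_pair.mpr (Or.inl rfl)))
  · exact Or.inr (Or.inr h)
  · right; left
    exact Finset.union_subset h1 (by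
      intro x hx
      rcases mem_pair.mp hx with rfl | rfl
      exacts [hiD, hjD])
  · exact Or.inl h
  · right; left
    intro x hx
    rcases Finset.mem_union.mp hx with hxA | hp
    · by_contra hxD
      have : x ∈ X \ D := Finset.mem_sdiff.mpr ⟨hAX hxA, hxD⟩
      exact (Finset.mem_sdiff.mp (Finset.mem_sdiff.mp (h this)).1).2 hxA
    · rcases mem_pair.mp hp with rfl | rfl
      exacts [hiD, hjD]
  · exfalso
    obtain ⟨x, hx⟩ := hXDne
    rcases mem_pair.mp (h hx) with rfl | rfl
    exacts [(Finset.mem_sdiff.mp hx).2 hiD, (Finset.mem_sdiff.mp hx).2 hjD]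
  · left
    intro x hx
    rcases Finset.mem_union.mp (h2 hx) with hA | hp
    · exact hA
    · exfalso
      rcases mem_pair.mp hp with rfl | rfl
      exacts [(Finset.mem_sdiff.mp hx).2 hiD, (Finset.mem_sdiff.mp hx).2 hjD]

/-- Combine the restrictions from the toggled splits to get SideOnPath for C itself. -/
lemma mainC {X A C : Finset ℕ} {i j : ℕ}
    (hiA : i ∉ A) (hjA : j ∉ A) (hAX : A ⊆ X) (hAne : A.Nonempty)
    (hcompl : ((X \ A) \ {i, j}).Nonempty)
    (hCX : C ⊆ X) (hiC : i ∈ C) (hjC : j ∉ C)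
    (h1 : C.erase i ⊆ A ∨ C.erase i ⊆ (X \ A) \ {i, j} ∨ X \ C.erase i ⊆ {i, j})
    (h2 : X \ insert j C ⊆ A ∨ A ∪ {i, j} ⊆ insert j C ∨ insert j C ⊆ {i, j}) :
    SideOnPath X i j A C ∨ SideOnPath X i j A (X \ C) := by
  unfold SideOnPath
  rcases h1 with h1 | h1 | h1
  · -- C.erase i ⊆ A, so C ⊆ insert i A
    rcases h2 with h2 | h2 | h2
    · -- contradiction with hcompl
      exfalso
      obtain ⟨x, hx⟩ := hcompl
      rw [Finset.mem_sdiff, Finset.mem_sdiff] at hx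
      obtain ⟨⟨hxX, hxA⟩, hxp⟩ := hx
      have hxi : x ≠ i := fun h => hxp (mem_pair.mpr (Or.inl h))
      have hxj : x ≠ j := fun h => hxp (mem_pair.mpr (Or.inr h))
      by_cases hxC : x ∈ C
      · exact hxA (h1 (Finset.mem_erase.mpr ⟨hxi, hxC⟩))
      · have : x ∈ X \ insert j C := by
          rw [Finset.mem_sdiff, Finset.mem_insert]
          push_neg
          exact ⟨hxX, hxj, hxC⟩
        exact hxA (h2 this)
    · -- A ∪ {i,j} ⊆ insert j C : C is a path split A ⊆ C ⊆ A ∪ {i,j}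
      left; right; right; right
      constructor
      · intro a ha
        rcases Finset.mem_insert.mp (h2 (Finset.mem_union_left _ ha)) with rfl | h
        · exact absurd ha hjA
        · exact h
      · intro x hx
        by_cases hxi : x = i
        · exact Finset.mem_union_right _ (mem_pair.mpr (Or.inl hxi))
        · exact Finset.mem_union_left _ (h1 (Finset.mem_erase.mpr ⟨hxi, hx⟩))
    · -- insert j C ⊆ {i,j}
      left; right; right; left
      exact fun x hx => h2 (Finset.mem_insert_of_mem hx)
  · -- C.erase i ⊆ (X \ A) \ {i,j} : C is disjoint from A (except possibly i, but i ∉ A)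
    have hCA : ∀ x ∈ C, x ∉ A := by
      intro x hx hxA
      have hxi : x ≠ i := fun h => hiA (h ▸ hxA)
      exact (Finset.mem_sdiff.mp (Finset.mem_sdiff.mp (h1 (Finset.mem_erase.mpr ⟨hxi, hx⟩))).1).2 hxA
    rcases h2 with h2 | h2 | h2
    · -- X \ C = A ∪ {j} : path split on complement side
      right; right; right; right
      constructor
      · intro a ha
        exact Finset.mem_sdiff.mpr ⟨hAX ha, fun hc => hCA a hc ha⟩
      · intro x hx
        rw [Finset.mem_sdiff] at hx
        by_cases hxj : x = j
        · exact Finset.mem_union_right _ (mem_pair.mpr (Or.inr hxj))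
        · have : x ∈ X \ insert j C := by
            rw [Finset.mem_sdiff, Finset.mem_insert]
            push_neg
            exact ⟨hx.1, hxj, hx.2⟩
          exact Finset.mem_union_left _ (h2 this)
    · -- A ∪ {i,j} ⊆ insert j C forces A ⊆ C, contradicting disjointness and A nonempty
      exfalso
      obtain ⟨a, ha⟩ := hAne
      rcases Finset.mem_insert.mp (h2 (Finset.mem_union_left _ ha)) with rfl | h
      · exact hjA ha
      · exact hCA a h ha
    · left; right; right; left
      exact fun x hx => h2 (Finset.mem_insert_of_mem hx)
  · -- X \ C.erase i ⊆ {i,j} gives X \ C ⊆ {i,j}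
    right; right; right; left
    intro x hx
    rw [Finset.mem_sdiff] at hx
    exact h1 (Finset.mem_sdiff.mpr ⟨hx.1, fun hh => hx.2 (Finset.mem_of_mem_erase hh)⟩)


lemma caseB (X : Finset ℕ) (S T : Finset (Finset ℕ)) (i j : ℕ)
    (hS : IsUBT X S) (hT : IsUBT X T) (hij : i ≠ j) (hiX : i ∈ X) (hjX : j ∈ X)
    (hKi : restrictU S (X.erase i) = restrictU T (X.erase i))
    (hKj : restrictU S (X.erase j) = restrictU T (X.erase j))
    (A : Finset ℕ) (C : Finset ℕ) (hCS : C ∈ S) (hCT : C ∉ T)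
    (hiC : i ∉ C) (hjC : j ∉ C) :
    SideOnPath X i j A C ∨ SideOnPath X i j A (X \ C) := by
  have hCi : insert i C ∈ T := (toggle X S T i hS hT hiX hKi C hCS hCT).2 hiC
  have hCj : insert j C ∈ T := (toggle X S T j hS hT hjX hKj C hCS hCT).2 hjC
  have hCne := (hS.1 C hCS).2.1
  rcases hT.2.2.2.1 _ hCi _ hCj with h | h | h | h
  · exfalso
    obtain ⟨x, hx⟩ := hCne
    exact Finset.eq_empty_iff_forall_notMem.mp h x
      (Finset.mem_inter.mpr ⟨Finset.mem_insert_of_mem hx, Finset.mem_insert_of_mem hx⟩)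
  · exfalso
    rcases Finset.mem_insert.mp (h (Finset.mem_insert_self i C)) with h' | h'
    exacts [hij h', hiC h']
  · exfalso
    rcases Finset.mem_insert.mp (h (Finset.mem_insert_self j C)) with h' | h'
    exacts [hij h'.symm, hjC h']
  · right
    unfold SideOnPath
    right; right; left
    intro x hx
    rw [Finset.mem_sdiff] at hx
    rcases Finset.mem_union.mp (h hx.1) with h' | h' <;>
      rcases Finset.mem_insert.mp h' with rfl | h''
    · exact mem_pair.mpr (Or.inl rfl)
    · exact absurd h'' hx.2
    · exact mem_pair.mpr (Or.inr rfl)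
    · exact absurd h'' hx.2

lemma caseA (X : Finset ℕ) (S T : Finset (Finset ℕ)) (i j : ℕ)
    (hS : IsUBT X S) (hT : IsUBT X T) (hiX : i ∈ X) (hjX : j ∈ X)
    (hKi : restrictU S (X.erase i) = restrictU T (X.erase i))
    (hKj : restrictU S (X.erase j) = restrictU T (X.erase j))
    (A : Finset ℕ) (hiA : i ∉ A) (hjA : j ∉ A) (hAX : A ⊆ X) (hAne : A.Nonempty)
    (hcompl : ((X \ A) \ {i, j}).Nonempty)
    (hPT : PathStructure X i j A T)
    (C : Finset ℕ) (hCS : C ∈ S) (hCT : C ∉ T) (hiC : i ∈ C) (hjC : j ∉ C) :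
    SideOnPath X i j A C ∨ SideOnPath X i j A (X \ C) := by
  have hCi : C.erase i ∈ T := (toggle X S T i hS hT hiX hKi C hCS hCT).1 hiC
  have hCj : insert j C ∈ T := (toggle X S T j hS hT hjX hKj C hCS hCT).2 hjC
  obtain ⟨hCiX, hCine, _⟩ := hT.1 _ hCi
  obtain ⟨hCjX, _, hCjc⟩ := hT.1 _ hCj
  have h1 := subL1 hiX hiA hCiX hCine (Finset.notMem_erase i C)
    (fun h => hjC (Finset.mem_of_mem_erase h)) (hPT _ hCi)
  have h2' := subL2 hiA hjA hAX hCjX hCjc (Finset.mem_insert_of_mem hiC)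
    (Finset.mem_insert_self j C) (hPT _ hCj)
  have h2 : X \ insert j C ⊆ A ∨ A ∪ {i, j} ⊆ insert j C ∨ insert j C ⊆ {i, j} := h2'
  exact mainC hiA hjA hAX hAne hcompl (hS.1 C hCS).1 hiC hjC h1 h2

lemma nonsep (X : Finset ℕ) (S T : Finset (Finset ℕ)) (i j : ℕ)
    (hS : IsUBT X S) (hT : IsUBT X T) (hij : i ≠ j) (hiX : i ∈ X) (hjX : j ∈ X)
    (hKi : restrictU S (X.erase i) = restrictU T (X.erase i))
    (hKj : restrictU S (X.erase j) = restrictU T (X.erase j))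
    (B : Finset ℕ) (hBS : B ∈ S) (hBT : B ∉ T)
    (hb : (i ∈ B ∧ j ∈ B) ∨ (i ∉ B ∧ j ∉ B)) :
    ({i, j} : Finset ℕ) ∈ S ∧ ({i, j} : Finset ℕ) ∉ T := by
  obtain ⟨hBX, hBne, hXBne⟩ := hS.1 B hBS
  rcases hb with ⟨hiB, hjB⟩ | ⟨hiB, hjB⟩
  · have hBi : B.erase i ∈ T := (toggle X S T i hS hT hiX hKi B hBS hBT).1 hiB
    have hBj : B.erase j ∈ T := (toggle X S T j hS hT hjX hKj B hBS hBT).1 hjB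
    have hBeq : B = {i, j} := by
      rcases hT.2.2.2.1 _ hBi _ hBj with h | h | h | h
      · apply Finset.Subset.antisymm
        · intro x hx
          by_contra hxp
          rw [mem_pair] at hxp
          push_neg at hxp
          exact Finset.eq_empty_iff_forall_notMem.mp h x (Finset.mem_inter.mpr
            ⟨Finset.mem_erase.mpr ⟨hxp.1, hx⟩, Finset.mem_erase.mpr ⟨hxp.2, hx⟩⟩)
        · intro x hx
          rcases mem_pair.mp hx with rfl | rfl
          exacts [hiB, hjB]
      · exact absurd (h (Finset.mem_erase.mpr ⟨Ne.symm hij, hjB⟩)) (Finset.notMem_erase j B)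
      · exact absurd (h (Finset.mem_erase.mpr ⟨hij, hiB⟩)) (Finset.notMem_erase i B)
      · exfalso
        obtain ⟨x, hx⟩ := hXBne
        rw [Finset.mem_sdiff] at hx
        rcases Finset.mem_union.mp (h hx.1) with h' | h' <;>
          exact hx.2 (Finset.mem_of_mem_erase h')
    exact ⟨hBeq ▸ hBS, hBeq ▸ hBT⟩
  · have hBi : insert i B ∈ T := (toggle X S T i hS hT hiX hKi B hBS hBT).2 hiB
    have hBj : insert j B ∈ T := (toggle X S T j hS hT hjX hKj B hBS hBT).2 hjB
    have hBeq : X \ B = {i, j} := by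
      rcases hT.2.2.2.1 _ hBi _ hBj with h | h | h | h
      · exfalso
        obtain ⟨x, hx⟩ := hBne
        exact Finset.eq_empty_iff_forall_notMem.mp h x
          (Finset.mem_inter.mpr ⟨Finset.mem_insert_of_mem hx, Finset.mem_insert_of_mem hx⟩)
      · exfalso
        rcases Finset.mem_insert.mp (h (Finset.mem_insert_self i B)) with h' | h'
        exacts [hij h', hiB h']
      · exfalso
        rcases Finset.mem_insert.mp (h (Finset.mem_insert_self j B)) with h' | h'
        exacts [hij h'.symm, hjB h']
      · apply Finset.Subset.antisymm
        · intro x hx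
          rw [Finset.mem_sdiff] at hx
          rcases Finset.mem_union.mp (h hx.1) with h' | h' <;>
            rcases Finset.mem_insert.mp h' with rfl | h''
          · exact mem_pair.mpr (Or.inl rfl)
          · exact absurd h'' hx.2
          · exact mem_pair.mpr (Or.inr rfl)
          · exact absurd h'' hx.2
        · intro x hx
          rcases mem_pair.mp hx with rfl | rfl
          · exact Finset.mem_sdiff.mpr ⟨hiX, hiB⟩
          · exact Finset.mem_sdiff.mpr ⟨hjX, hjB⟩
    refine ⟨hBeq ▸ hS.2.1 B hBS, fun hT' => hBT ?_⟩
    have := hT.2.1 _ hT'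
    rwa [← hBeq, compl_compl' hBX] at this

lemma key (X : Finset ℕ) (S T : Finset (Finset ℕ)) (i j : ℕ)
    (hS : IsUBT X S) (hT : IsUBT X T) (hij : i ≠ j) (hiX : i ∈ X) (hjX : j ∈ X)
    (hKi : restrictU S (X.erase i) = restrictU T (X.erase i))
    (hKj : restrictU S (X.erase j) = restrictU T (X.erase j))
    (B : Finset ℕ) (hBS : B ∈ S) (hBT : B ∉ T) (hiB : i ∈ B) (hjB : j ∉ B) :
    ∃ A ⊆ (X.erase i).erase j, A.Nonempty ∧ ((X \ A) \ {i, j}).Nonempty ∧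
      PathStructure X i j A S ∧ PathStructure X i j A T := by
  have hAT : B.erase i ∈ T := (toggle X S T i hS hT hiX hKi B hBS hBT).1 hiB
  have hBjT : insert j B ∈ T := (toggle X S T j hS hT hjX hKj B hBS hBT).2 hjB
  set A := B.erase i with hA
  have hiA : i ∉ A := Finset.notMem_erase i B
  have hjA : j ∉ A := fun h => hjB (Finset.mem_of_mem_erase h)
  have hA'eq : insert j B = A ∪ {i, j} := by
    ext x
    rw [Finset.mem_insert, Finset.mem_union, mem_pair, hA, Finset.mem_erase]
    constructor
    · rintro (rfl | hx)
      · exact Or.inr (Or.inr rfl)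
      · by_cases hxi : x = i
        · exact Or.inr (Or.inl hxi)
        · exact Or.inl ⟨hxi, hx⟩
    · rintro (⟨hxi, hx⟩ | rfl | rfl)
      · exact Or.inr hx
      · exact Or.inr hiB
      · exact Or.inl rfl
  have hA'T : A ∪ {i, j} ∈ T := hA'eq ▸ hBjT
  obtain ⟨hAX, hAne, _⟩ := hT.1 A hAT
  obtain ⟨hA'X, _, hA'c⟩ := hT.1 _ hA'T
  have hcompl : ((X \ A) \ ({i, j} : Finset ℕ)).Nonempty := by
    have heq : X \ (A ∪ {i, j}) = (X \ A) \ {i, j} := by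
      ext x
      simp only [Finset.mem_sdiff, Finset.mem_union]
      tauto
    exact heq ▸ hA'c
  have hPT : PathStructure X i j A T := by
    intro C hCT
    exact compatSOP hAX (hT.1 C hCT).1 (hT.2.2.2.1 C hCT A hAT) (hT.2.2.2.1 C hCT _ hA'T)
  have hPS : PathStructure X i j A S := by
    intro C hCS
    by_cases hCT : C ∈ T
    · exact hPT C hCT
    · have hCX := (hS.1 C hCS).1
      have hC'S : X \ C ∈ S := hS.2.1 C hCS
      have hcc : X \ (X \ C) = C := compl_compl' hCX
      have hC'T : X \ C ∉ T := fun h => hCT (by have := hT.2.1 _ h; rwa [hcc] at this)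
      by_cases hiC : i ∈ C <;> by_cases hjC : j ∈ C
      · have := caseB X S T i j hS hT hij hiX hjX hKi hKj A (X \ C) hC'S hC'T
          (fun h => (Finset.mem_sdiff.mp h).2 hiC) (fun h => (Finset.mem_sdiff.mp h).2 hjC)
        rw [hcc] at this
        exact this.symm
      · exact caseA X S T i j hS hT hiX hjX hKi hKj A hiA hjA hAX hAne hcompl hPT
          C hCS hCT hiC hjC
      · have := caseA X S T i j hS hT hiX hjX hKi hKj A hiA hjA hAX hAne hcompl hPT
          (X \ C) hC'S hC'T (Finset.mem_sdiff.mpr ⟨hiX, hiC⟩)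
          (fun h => (Finset.mem_sdiff.mp h).2 hjC)
        rw [hcc] at this
        exact this.symm
      · exact caseB X S T i j hS hT hij hiX hjX hKi hKj A C hCS hCT hiC hjC
  refine ⟨A, ?_, hAne, hcompl, hPS, hPT⟩
  intro x hx
  exact Finset.mem_erase.mpr ⟨fun h => hjA (h ▸ hx),
    Finset.mem_erase.mpr ⟨fun h => hiA (h ▸ hx), hAX hx⟩⟩

lemma key2 (X : Finset ℕ) (S T : Finset (Finset ℕ)) (i j : ℕ)
    (hS : IsUBT X S) (hT : IsUBT X T) (hij : i ≠ j) (hiX : i ∈ X) (hjX : j ∈ X)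
    (hKi : restrictU S (X.erase i) = restrictU T (X.erase i))
    (hKj : restrictU S (X.erase j) = restrictU T (X.erase j))
    (B : Finset ℕ) (hBS : B ∈ S) (hBT : B ∉ T)
    (hsep : (i ∈ B ∧ j ∉ B) ∨ (i ∉ B ∧ j ∈ B)) :
    ∃ A ⊆ (X.erase i).erase j, A.Nonempty ∧ ((X \ A) \ {i, j}).Nonempty ∧
      PathStructure X i j A S ∧ PathStructure X i j A T := by
  rcases hsep with ⟨h1, h2⟩ | ⟨h1, h2⟩
  · exact key X S T i j hS hT hij hiX hjX hKi hKj B hBS hBT h1 h2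
  · have hBX := (hS.1 B hBS).1
    refine key X S T i j hS hT hij hiX hjX hKi hKj (X \ B) (hS.2.1 B hBS)
      (fun h => hBT ?_) (Finset.mem_sdiff.mpr ⟨hiX, h1⟩)
      (fun h => (Finset.mem_sdiff.mp h).2 h2)
    have := hT.2.1 _ h
    rwa [compl_compl' hBX] at this

/-- If two distinct unrooted binary leaf-labelled trees `S` and `T` on `[n]`
agree after deleting leaf `i` and also after deleting leaf `j` (`i ≠ j`), then
they differ only in the placement of leaves `i` and `j` along a common path:
they have the same restriction to `[n] \ {i,j}`, and both consist of two rooted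
subtrees joined by a path with `i` and `j` attached (in some order) to edges of
this path. -/
theorem two_partner_structure (n : ℕ) (S T : Finset (Finset ℕ)) (i j : ℕ)
    (hS : IsUBT (Finset.range n) S) (hT : IsUBT (Finset.range n) T)
    (hne : S ≠ T) (hi : i ∈ Finset.range n) (hj : j ∈ Finset.range n) (hij : i ≠ j)
    (hKi : restrictU S ((Finset.range n).erase i) = restrictU T ((Finset.range n).erase i))
    (hKj : restrictU S ((Finset.range n).erase j) = restrictU T ((Finset.range n).erase j)) :
    restrictU S (((Finset.range n).erase i).erase j)
      = restrictU T (((Finset.range n).erase i).erase j) ∧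
    ∃ A ⊆ ((Finset.range n).erase i).erase j, A.Nonempty ∧
      ((Finset.range n \ A) \ {i, j}).Nonempty ∧
      PathStructure (Finset.range n) i j A S ∧
      PathStructure (Finset.range n) i j A T := by
  have hcard : S.card = T.card := by rw [hS.2.2.2.2, hT.2.2.2.2]
  have hST : ∃ B, B ∈ S ∧ B ∉ T := by
    by_contra h
    push_neg at h
    exact hne (Finset.eq_of_subset_of_card_le (fun B hB => h B hB) (le_of_eq hcard.symm))
  have hTS : ∃ B, B ∈ T ∧ B ∉ S := by
    by_contra h
    push_neg at h
    exact hne ((Finset.eq_of_subset_of_card_le (fun B hB => h B hB) (le_of_eq hcard)).symm)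
  constructor
  · have h1 : ((Finset.range n).erase i).erase j ⊆ (Finset.range n).erase i :=
      Finset.erase_subset j ((Finset.range n).erase i)
    calc restrictU S (((Finset.range n).erase i).erase j)
        = restrictU (restrictU S ((Finset.range n).erase i))
            (((Finset.range n).erase i).erase j) := (restrict_restrict _ _ _ h1).symm
      _ = restrictU (restrictU T ((Finset.range n).erase i))
            (((Finset.range n).erase i).erase j) := by rw [hKi]
      _ = restrictU T (((Finset.range n).erase i).erase j) := restrict_restrict _ _ _ h1
  · obtain ⟨B, hBS, hBT⟩ := hST
    by_cases hsep : (i ∈ B ∧ j ∉ B) ∨ (i ∉ B ∧ j ∈ B)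
    · exact key2 (Finset.range n) S T i j hS hT hij hi hj hKi hKj B hBS hBT hsep
    · have hnon : (i ∈ B ∧ j ∈ B) ∨ (i ∉ B ∧ j ∉ B) := by tauto
      obtain ⟨hijS, hijT⟩ := nonsep (Finset.range n) S T i j hS hT hij hi hj hKi hKj
        B hBS hBT hnon
      obtain ⟨B', hB'T, hB'S⟩ := hTS
      have hsep' : (i ∈ B' ∧ j ∉ B') ∨ (i ∉ B' ∧ j ∈ B') := by
        by_cases hiB' : i ∈ B' <;> by_cases hjB' : j ∈ B'
        · exfalso
          exact hijT (nonsep (Finset.range n) T S i j hT hS hij hi hj hKi.symm hKj.symm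
            B' hB'T hB'S (Or.inl ⟨hiB', hjB'⟩)).1
        · exact Or.inl ⟨hiB', hjB'⟩
        · exact Or.inr ⟨hiB', hjB'⟩
        · exfalso
          exact hijT (nonsep (Finset.range n) T S i j hT hS hij hi hj hKi.symm hKj.symm
            B' hB'T hB'S (Or.inr ⟨hiB', hjB'⟩)).1
      obtain ⟨A, hA1, hA2, hA3, hPT, hPS⟩ := key2 (Finset.range n) T S i j hT hS hij hi hj
        hKi.symm hKj.symm B' hB'T hB'S hsep'
      exact ⟨A, hA1, hA2, hA3, hPS, hPT⟩
end
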